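/- Let s ∈ ℤ and let f be a complex-valued twice continuously differentiable function of (θ, φ) ∈ (0,π) × ℝ. Then at every point of (0,π) × ℝ one has Z̃₁(Z̃₁f) + Z̃₂(Z̃₂f) + Z̃₃(Z̃₃f) = Δ̊_{[s]}f − (s + s²)·f, where Δ̊_{[s]}f = (1/sinθ)·∂_θ(sinθ·∂_θ f) + (1/sin²θ)·∂_φ² f + 2·i·s·(cosθ/sin²θ)·∂_φ f − (s²·cos²θ/sin²θ − s)·f is the spin s-weighted Laplacian. -/

import Mathlib

open Set

/-- The spin `s`-weighted angular operator `Z̃₁`. -/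
noncomputable def Zt1 (s : ℤ) (f : ℝ → ℝ → ℂ) : ℝ → ℝ → ℂ := fun θ φ =>
  -(Real.sin φ : ℂ) * deriv (fun t => f t φ) θ +
    (Real.cos φ : ℂ) *
      (-(Complex.I * (s : ℂ) * f θ φ) / (Real.sin θ : ℂ) -
        ((Real.cos θ : ℂ) / (Real.sin θ : ℂ)) * deriv (fun p => f θ p) φ)

/-- The spin `s`-weighted angular operator `Z̃₂`. -/
noncomputable def Zt2 (s : ℤ) (f : ℝ → ℝ → ℂ) : ℝ → ℝ → ℂ := fun θ φ =>
  -(Real.cos φ : ℂ) * deriv (fun t => f t φ) θ -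
    (Real.sin φ : ℂ) *
      (-(Complex.I * (s : ℂ) * f θ φ) / (Real.sin θ : ℂ) -
        ((Real.cos θ : ℂ) / (Real.sin θ : ℂ)) * deriv (fun p => f θ p) φ)

/-- The angular operator `Z̃₃ = ∂_φ`. -/
noncomputable def Zt3 (f : ℝ → ℝ → ℂ) : ℝ → ℝ → ℂ := fun θ φ => deriv (fun p => f θ p) φ

/-- The spin `s`-weighted Laplacian on `(0,π) × ℝ`. -/
noncomputable def spinLaplacian (s : ℤ) (f : ℝ → ℝ → ℂ) : ℝ → ℝ → ℂ := fun θ φ =>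
  (1 / (Real.sin θ : ℂ)) *
      deriv (fun t => (Real.sin t : ℂ) * deriv (fun t' => f t' φ) t) θ
    + (1 / (Real.sin θ : ℂ) ^ 2) * deriv (deriv (fun p => f θ p)) φ
    + 2 * Complex.I * (s : ℂ) * ((Real.cos θ : ℂ) / (Real.sin θ : ℂ) ^ 2) *
        deriv (fun p => f θ p) φ
    - ((s : ℂ) ^ 2 * (Real.cos θ : ℂ) ^ 2 / (Real.sin θ : ℂ) ^ 2 - (s : ℂ)) * f θ φ

/-- `Z̃₁² + Z̃₂² + Z̃₃² = Δ̊_[s] - (s + s²)` on twice continuously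
differentiable functions on `(0,π) × ℝ`. -/
theorem stmt_10 (s : ℤ) (f : ℝ → ℝ → ℂ)
    (hf : ContDiffOn ℝ 2 (fun p : ℝ × ℝ => f p.1 p.2)
      (Ioo (0 : ℝ) Real.pi ×ˢ (univ : Set ℝ))) :
    ∀ θ ∈ Ioo (0 : ℝ) Real.pi, ∀ φ : ℝ,
      Zt1 s (Zt1 s f) θ φ + Zt2 s (Zt2 s f) θ φ + Zt3 (Zt3 f) θ φ =
        spinLaplacian s f θ φ - ((s : ℂ) + (s : ℂ) ^ 2) * f θ φ := by
  have hΩ : IsOpen (Ioo (0 : ℝ) Real.pi ×ˢ (univ : Set ℝ)) := isOpen_Ioo.prod isOpen_univ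
  set Ω : Set (ℝ × ℝ) := Ioo (0 : ℝ) Real.pi ×ˢ (univ : Set ℝ) with hΩdef
  set F : ℝ × ℝ → ℂ := fun p => f p.1 p.2 with hFdef
  set P1 : ℝ → ℝ → ℂ := fun t p => fderiv ℝ F (t, p) (1, 0) with hP1def
  set P2 : ℝ → ℝ → ℂ := fun t p => fderiv ℝ F (t, p) (0, 1) with hP2def
  have hmem : ∀ t ∈ Ioo (0 : ℝ) Real.pi, ∀ p : ℝ, (t, p) ∈ Ω := fun t ht p => ⟨ht, mem_univ _⟩
  have hd1 : ∀ x ∈ Ω, HasDerivAt (fun t => f t x.2) (P1 x.1 x.2) x.1 := by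
    intro x hx
    have hdiff : DifferentiableAt ℝ F x :=
      (hf.contDiffAt (hΩ.mem_nhds hx)).differentiableAt two_ne_zero
    have h := hdiff.hasFDerivAt.comp_hasDerivAt (x := x.1)
      ((hasDerivAt_id x.1).prodMk (hasDerivAt_const x.1 x.2))
    simpa [hP1def, Function.comp_def] using h
  have hd2 : ∀ x ∈ Ω, HasDerivAt (fun p => f x.1 p) (P2 x.1 x.2) x.2 := by
    intro x hx
    have hdiff : DifferentiableAt ℝ F x :=
      (hf.contDiffAt (hΩ.mem_nhds hx)).differentiableAt two_ne_zero
    have h := hdiff.hasFDerivAt.comp_hasDerivAt (x := x.2)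
      ((hasDerivAt_const x.2 x.1).prodMk (hasDerivAt_id x.2))
    simpa [hP2def, Function.comp_def] using h
  have hD : ContDiffOn ℝ 1 (fderiv ℝ F) Ω := hf.fderiv_of_isOpen hΩ le_rfl
  have hD' : ∀ x ∈ Ω, DifferentiableAt ℝ (fderiv ℝ F) x := fun x hx =>
    ((hD x hx).contDiffAt (hΩ.mem_nhds hx)).differentiableAt one_ne_zero
  have hP : ∀ v : ℝ × ℝ, ∀ x ∈ Ω,
      HasDerivAt (fun t => fderiv ℝ F (t, x.2) v) (fderiv ℝ (fderiv ℝ F) x (1, 0) v) x.1 := by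
    intro v x hx
    have h := ((ContinuousLinearMap.apply ℝ ℂ v).hasFDerivAt.comp x
        ((hD' x hx).hasFDerivAt)).comp_hasDerivAt (x := x.1)
      ((hasDerivAt_id x.1).prodMk (hasDerivAt_const x.1 x.2))
    simpa [Function.comp_def] using h
  have hQ : ∀ v : ℝ × ℝ, ∀ x ∈ Ω,
      HasDerivAt (fun p => fderiv ℝ F (x.1, p) v) (fderiv ℝ (fderiv ℝ F) x (0, 1) v) x.2 := by
    intro v x hx
    have h := ((ContinuousLinearMap.apply ℝ ℂ v).hasFDerivAt.comp x
        ((hD' x hx).hasFDerivAt)).comp_hasDerivAt (x := x.2)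
      ((hasDerivAt_const x.2 x.1).prodMk (hasDerivAt_id x.2))
    simpa [Function.comp_def] using h
  have hsymm : ∀ x ∈ Ω,
      fderiv ℝ (fderiv ℝ F) x (0, 1) (1, 0) = fderiv ℝ (fderiv ℝ F) x (1, 0) (0, 1) :=
    fun x hx => (hf.contDiffAt (hΩ.mem_nhds hx)).isSymmSndFDerivAt minSmoothness_of_isRCLikeNormedField.le _ _
  -- pointwise description of Zt1, Zt2
  have hZ1 : ∀ t ∈ Ioo (0 : ℝ) Real.pi, ∀ p : ℝ, Zt1 s f t p =
      -(Real.sin p : ℂ) * P1 t p +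
        (Real.cos p : ℂ) * (-(Complex.I * (s : ℂ) * f t p) / (Real.sin t : ℂ) -
          ((Real.cos t : ℂ) / (Real.sin t : ℂ)) * P2 t p) := by
    intro t ht p
    simp only [Zt1, (hd1 (t, p) (hmem t ht p)).deriv, (hd2 (t, p) (hmem t ht p)).deriv]
  have hZ2 : ∀ t ∈ Ioo (0 : ℝ) Real.pi, ∀ p : ℝ, Zt2 s f t p =
      -(Real.cos p : ℂ) * P1 t p -
        (Real.sin p : ℂ) * (-(Complex.I * (s : ℂ) * f t p) / (Real.sin t : ℂ) -
          ((Real.cos t : ℂ) / (Real.sin t : ℂ)) * P2 t p) := by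
    intro t ht p
    simp only [Zt2, (hd1 (t, p) (hmem t ht p)).deriv, (hd2 (t, p) (hmem t ht p)).deriv]
  intro θ hθ φ
  have hx : (θ, φ) ∈ Ω := hmem θ hθ φ
  have hsθ0 : Real.sin θ ≠ 0 := (Real.sin_pos_of_pos_of_lt_pi hθ.1 hθ.2).ne'
  have hsne : (Real.sin θ : ℂ) ≠ 0 := Complex.ofReal_ne_zero.mpr hsθ0
  -- basic HasDerivAt building blocks at (θ, φ)
  have hsinθ : HasDerivAt (fun t : ℝ => (Real.sin t : ℂ)) (Real.cos θ : ℂ) θ :=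
    (Real.hasDerivAt_sin θ).ofReal_comp
  have hcosθ : HasDerivAt (fun t : ℝ => (Real.cos t : ℂ)) (-(Real.sin θ : ℂ)) θ := by
    simpa using (Real.hasDerivAt_cos θ).ofReal_comp
  have hsinφ : HasDerivAt (fun p : ℝ => (Real.sin p : ℂ)) (Real.cos φ : ℂ) φ :=
    (Real.hasDerivAt_sin φ).ofReal_comp
  have hcosφ : HasDerivAt (fun p : ℝ => (Real.cos p : ℂ)) (-(Real.sin φ : ℂ)) φ := by
    simpa using (Real.hasDerivAt_cos φ).ofReal_comp
  have hfθ : HasDerivAt (fun t => f t φ) (P1 θ φ) θ := hd1 (θ, φ) hx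
  have hfφ : HasDerivAt (fun p => f θ p) (P2 θ φ) φ := hd2 (θ, φ) hx
  have hp1θ : HasDerivAt (fun t => P1 t φ) (fderiv ℝ (fderiv ℝ F) (θ, φ) (1, 0) (1, 0)) θ :=
    hP (1, 0) (θ, φ) hx
  have hp2θ : HasDerivAt (fun t => P2 t φ) (fderiv ℝ (fderiv ℝ F) (θ, φ) (1, 0) (0, 1)) θ :=
    hP (0, 1) (θ, φ) hx
  have hp1φ : HasDerivAt (fun p => P1 θ p) (fderiv ℝ (fderiv ℝ F) (θ, φ) (1, 0) (0, 1)) φ := by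
    have := hQ (1, 0) (θ, φ) hx
    rwa [hsymm (θ, φ) hx] at this
  have hp2φ : HasDerivAt (fun p => P2 θ p) (fderiv ℝ (fderiv ℝ F) (θ, φ) (0, 1) (0, 1)) φ :=
    hQ (0, 1) (θ, φ) hx
  -- θ-derivative of Zt1 f (·, φ)
  have hev1 : (fun t => Zt1 s f t φ) =ᶠ[nhds θ] fun t =>
      -(Real.sin φ : ℂ) * P1 t φ +
        (Real.cos φ : ℂ) * (-(Complex.I * (s : ℂ) * f t φ) / (Real.sin t : ℂ) -
          ((Real.cos t : ℂ) / (Real.sin t : ℂ)) * P2 t φ) := by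
    filter_upwards [isOpen_Ioo.mem_nhds hθ] with t ht
    exact hZ1 t ht φ
  have hG1 : HasDerivAt (fun t =>
      -(Real.sin φ : ℂ) * P1 t φ +
        (Real.cos φ : ℂ) * (-(Complex.I * (s : ℂ) * f t φ) / (Real.sin t : ℂ) -
          ((Real.cos t : ℂ) / (Real.sin t : ℂ)) * P2 t φ)) _ θ :=
    (hp1θ.const_mul (-(Real.sin φ : ℂ))).add
      ((((hfθ.const_mul (Complex.I * (s : ℂ))).neg.div hsinθ hsne).sub
        ((hcosθ.div hsinθ hsne).mul hp2θ)).const_mul (Real.cos φ : ℂ))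
  have hT1 := (hev1.deriv_eq).trans hG1.deriv
  -- φ-derivative of Zt1 f (θ, ·)
  have hfun1 : (fun p => Zt1 s f θ p) = fun p =>
      -(Real.sin p : ℂ) * P1 θ p +
        (Real.cos p : ℂ) * (-(Complex.I * (s : ℂ) * f θ p) / (Real.sin θ : ℂ) -
          ((Real.cos θ : ℂ) / (Real.sin θ : ℂ)) * P2 θ p) := funext fun p => hZ1 θ hθ p
  have hG2 : HasDerivAt (fun p =>
      -(Real.sin p : ℂ) * P1 θ p +
        (Real.cos p : ℂ) * (-(Complex.I * (s : ℂ) * f θ p) / (Real.sin θ : ℂ) -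
          ((Real.cos θ : ℂ) / (Real.sin θ : ℂ)) * P2 θ p)) _ φ :=
    ((hsinφ.neg.mul hp1φ)).add
      (hcosφ.mul (((hfφ.const_mul (Complex.I * (s : ℂ))).neg.div_const _).sub
        (hp2φ.const_mul _)))
  have hT2 := (congrArg (fun g => deriv g φ) hfun1).trans hG2.deriv
  -- θ-derivative of Zt2 f (·, φ)
  have hev2 : (fun t => Zt2 s f t φ) =ᶠ[nhds θ] fun t =>
      -(Real.cos φ : ℂ) * P1 t φ -
        (Real.sin φ : ℂ) * (-(Complex.I * (s : ℂ) * f t φ) / (Real.sin t : ℂ) -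
          ((Real.cos t : ℂ) / (Real.sin t : ℂ)) * P2 t φ) := by
    filter_upwards [isOpen_Ioo.mem_nhds hθ] with t ht
    exact hZ2 t ht φ
  have hG3 : HasDerivAt (fun t =>
      -(Real.cos φ : ℂ) * P1 t φ -
        (Real.sin φ : ℂ) * (-(Complex.I * (s : ℂ) * f t φ) / (Real.sin t : ℂ) -
          ((Real.cos t : ℂ) / (Real.sin t : ℂ)) * P2 t φ)) _ θ :=
    (hp1θ.const_mul (-(Real.cos φ : ℂ))).sub
      ((((hfθ.const_mul (Complex.I * (s : ℂ))).neg.div hsinθ hsne).sub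
        ((hcosθ.div hsinθ hsne).mul hp2θ)).const_mul (Real.sin φ : ℂ))
  have hT3 := (hev2.deriv_eq).trans hG3.deriv
  -- φ-derivative of Zt2 f (θ, ·)
  have hfun2 : (fun p => Zt2 s f θ p) = fun p =>
      -(Real.cos p : ℂ) * P1 θ p -
        (Real.sin p : ℂ) * (-(Complex.I * (s : ℂ) * f θ p) / (Real.sin θ : ℂ) -
          ((Real.cos θ : ℂ) / (Real.sin θ : ℂ)) * P2 θ p) := funext fun p => hZ2 θ hθ p
  have hG4 : HasDerivAt (fun p =>
      -(Real.cos p : ℂ) * P1 θ p -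
        (Real.sin p : ℂ) * (-(Complex.I * (s : ℂ) * f θ p) / (Real.sin θ : ℂ) -
          ((Real.cos θ : ℂ) / (Real.sin θ : ℂ)) * P2 θ p)) _ φ :=
    ((hcosφ.neg.mul hp1φ)).sub
      (hsinφ.mul (((hfφ.const_mul (Complex.I * (s : ℂ))).neg.div_const _).sub
        (hp2φ.const_mul _)))
  have hT4 := (congrArg (fun g => deriv g φ) hfun2).trans hG4.deriv
  -- Zt3 Zt3
  have hde2 : (deriv fun p => f θ p) = fun p => P2 θ p :=
    funext fun p => (hd2 (θ, p) (hmem θ hθ p)).deriv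
  have hT5 : deriv (deriv fun p => f θ p) φ = fderiv ℝ (fderiv ℝ F) (θ, φ) (0, 1) (0, 1) := by
    rw [hde2]; exact hp2φ.deriv
  -- sin-weighted θ-term of the Laplacian
  have hev3 : (fun t => (Real.sin t : ℂ) * deriv (fun t' => f t' φ) t) =ᶠ[nhds θ]
      fun t => (Real.sin t : ℂ) * P1 t φ := by
    filter_upwards [isOpen_Ioo.mem_nhds hθ] with t ht
    rw [(hd1 (t, φ) (hmem t ht φ)).deriv]
  have hG5 : HasDerivAt (fun t => (Real.sin t : ℂ) * P1 t φ) _ θ := hsinθ.mul hp1θ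
  have hT6 := (hev3.deriv_eq).trans hG5.deriv
  -- now unfold everything
  have hφid : (Real.sin φ : ℂ) ^ 2 + (Real.cos φ : ℂ) ^ 2 = 1 := by
    norm_cast; exact Real.sin_sq_add_cos_sq φ
  have hθid : (Real.sin θ : ℂ) ^ 2 + (Real.cos θ : ℂ) ^ 2 = 1 := by
    norm_cast; exact Real.sin_sq_add_cos_sq θ
  have hI : Complex.I ^ 2 = -1 := Complex.I_sq
  have hinv : (Real.sin θ : ℂ) * (Real.sin θ : ℂ)⁻¹ = 1 := mul_inv_cancel₀ hsne
  simp only [Zt1, Zt2, Zt3, spinLaplacian] at hT1 hT2 hT3 hT4 ⊢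
  simp only [hT1, hT2, hT3, hT4, hT5, hT6, hfθ.deriv, hfφ.deriv, Pi.neg_apply, Pi.div_apply]
  set sθ : ℂ := (Real.sin θ : ℂ) with hsθdef
  set cθ : ℂ := (Real.cos θ : ℂ) with hcθdef
  set sφ : ℂ := (Real.sin φ : ℂ) with hsφdef
  set cφ : ℂ := (Real.cos φ : ℂ) with hcφdef
  set A : ℂ := f θ φ with hAdef
  set B1 : ℂ := P1 θ φ with hB1def
  set B2 : ℂ := P2 θ φ with hB2def
  set C11 : ℂ := fderiv ℝ (fderiv ℝ F) (θ, φ) (1, 0) (1, 0) with hC11def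
  set C12 : ℂ := fderiv ℝ (fderiv ℝ F) (θ, φ) (1, 0) (0, 1) with hC12def
  set C22 : ℂ := fderiv ℝ (fderiv ℝ F) (θ, φ) (0, 1) (0, 1) with hC22def
  linear_combination
    (C11 + Complex.I ^ 2 * (s : ℂ) ^ 2 * A / sθ ^ 2 + cθ * B1 / sθ
      + 2 * cθ * Complex.I * (s : ℂ) * B2 / sθ ^ 2 + cθ ^ 2 * C22 / sθ ^ 2) * hφid
    + (C22 / sθ ^ 2 + (s : ℂ) ^ 2 * A / sθ ^ 2) * hθid
    + ((s : ℂ) ^ 2 * A / sθ ^ 2) * hI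
    + (-C22 - C11 - (s : ℂ) ^ 2 * A - sθ * C22 * sθ⁻¹ - sθ * (s : ℂ) ^ 2 * A * sθ⁻¹) * hinv
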